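/- System (4.1) is dissipative: fix φ ∈ (0, μ] and set ρ = c₁K₁(r₁ + φ)²/(4r₁) + c₂K₂(r₂ + φ)²/(4r₂). Then every solution (x(t), y(t), z(t)) of (4.1) defined for all t ≥ 0 with nonnegative coordinates satisfies limsup_{t→∞} (c₁·x(t) + c₂·y(t) + z(t)) ≤ ρ/φ. In particular, there is a compact subset C of [0,∞)³ such that every nonnegative solution eventually enters and remains in C. -/

import Mathlib

/-!
With `W = c₁ x + c₂ y + z`, the predation terms cancel in `W' + φ W`, the competition terms and
`(φ - μ) z - m z²` are nonpositive, and each logistic term `c s ((r + φ) - r s / K)` is at most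
its peak value `c K (r + φ)² / (4 r)`. Hence `W' ≤ -φ W + ρ`, and Grönwall's inequality bounds
`W` by a function tending to `ρ / φ`. The compact set is `{W ≤ ρ / φ + 1}` in the closed orthant.
-/

open Filter

/-- A nonnegative solution of system (4.1). -/
def IsNonnegSol41 (r₁ r₂ K₁ K₂ q₁ q₂ a₁ a₂ c₁ c₂ μ m α₁₂ α₂₁ : ℝ)
    (x y z : ℝ → ℝ) : Prop :=
  (∀ t ≥ (0:ℝ), 0 ≤ x t ∧ 0 ≤ y t ∧ 0 ≤ z t) ∧
  (∀ t ≥ (0:ℝ), HasDerivAt x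
    (x t * (r₁ * (1 - x t / K₁) - α₁₂ * y t - q₁ * z t / (1 + a₁ * x t))) t) ∧
  (∀ t ≥ (0:ℝ), HasDerivAt y
    (y t * (r₂ * (1 - y t / K₂) - α₂₁ * x t - q₂ * z t / (1 + a₂ * y t))) t) ∧
  (∀ t ≥ (0:ℝ), HasDerivAt z
    (z t * (c₁ * q₁ * x t / (1 + a₁ * x t)
      + c₂ * q₂ * y t / (1 + a₂ * y t) - μ - m * z t)) t)

open Set Topology

theorem mul_sub_mul_sq_div_le {r K : ℝ} (hr : 0 < r) (hK : 0 < K) (s b : ℝ) :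
    s * b - r * s ^ 2 / K ≤ K * b ^ 2 / (4 * r) := by
  have hsquare : s * b - r * s ^ 2 / K
      = K * b ^ 2 / (4 * r) - (2 * r * s - K * b) ^ 2 / (4 * r * K) := by
    field_simp
    ring
  rw [hsquare]
  exact sub_le_self _ (by positivity)

theorem le_gronwallBound_of_hasDerivAt {f f' : ℝ → ℝ} {K ε : ℝ}
    (hf : ∀ t ≥ 0, HasDerivAt f (f' t) t) (bound : ∀ t ≥ 0, f' t ≤ K * f t + ε)
    {t : ℝ} (ht : 0 ≤ t) : f t ≤ gronwallBound (f 0) K ε t := by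
  simpa using le_gronwallBound_of_liminf_deriv_right_le (a := 0) (b := t)
    (fun s hs => (hf s hs.1).continuousAt.continuousWithinAt)
    (fun s hs _ hr => (hf s hs.1).hasDerivWithinAt.liminf_right_slope_le hr) le_rfl
    (fun s hs => bound s hs.1) t ⟨ht, le_rfl⟩

theorem tendsto_gronwallBound_of_neg (δ ε : ℝ) {K : ℝ} (hK : K < 0) :
    Tendsto (gronwallBound δ K ε) atTop (𝓝 (-ε / K)) := by
  have hexp : Tendsto (fun x => Real.exp (K * x)) atTop (𝓝 0) :=
    Real.tendsto_exp_atBot.comp (tendsto_id.const_mul_atTop_of_neg hK)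
  rw [gronwallBound_of_K_ne_0 hK.ne]
  convert (hexp.const_mul δ).add ((hexp.sub_const 1).const_mul (ε / K)) using 2
  ring

def weightedSimplex (c₁ c₂ R : ℝ) : Set (ℝ × ℝ × ℝ) :=
  {p | 0 ≤ p.1 ∧ 0 ≤ p.2.1 ∧ 0 ≤ p.2.2 ∧ c₁ * p.1 + c₂ * p.2.1 + p.2.2 ≤ R}

theorem isCompact_weightedSimplex {c₁ c₂ : ℝ} (hc₁ : 0 < c₁) (hc₂ : 0 < c₂) (R : ℝ) :
    IsCompact (weightedSimplex c₁ c₂ R) := by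
  refine (isCompact_Icc (a := (0, 0, 0)) (b := (R / c₁, R / c₂, R))).of_isClosed_subset ?_ ?_
  · refine (isClosed_le continuous_const continuous_fst).inter <|
      (isClosed_le continuous_const (continuous_fst.comp continuous_snd)).inter <|
      (isClosed_le continuous_const (continuous_snd.comp continuous_snd)).inter <|
      isClosed_le (f := fun p : ℝ × ℝ × ℝ => c₁ * p.1 + c₂ * p.2.1 + p.2.2)
        (by fun_prop) continuous_const
  · rintro ⟨p₁, p₂, p₃⟩ ⟨h₁, h₂, h₃, hW⟩
    simp only [mem_Icc, Prod.mk_le_mk]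
    refine ⟨⟨h₁, h₂, h₃⟩, ?_, ?_, ?_⟩
    · rw [le_div_iff₀ hc₁]; nlinarith
    · rw [le_div_iff₀ hc₂]; nlinarith
    · nlinarith

section System

variable {r₁ r₂ K₁ K₂ q₁ q₂ a₁ a₂ c₁ c₂ μ m α₁₂ α₂₁ φ : ℝ}

theorem weightedSum_field_le (hr₁ : 0 < r₁) (hr₂ : 0 < r₂) (hK₁ : 0 < K₁) (hK₂ : 0 < K₂)
    (hc₁ : 0 < c₁) (hc₂ : 0 < c₂) (hm : 0 < m) (hα₁₂ : 0 ≤ α₁₂) (hα₂₁ : 0 ≤ α₂₁)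
    (hφμ : φ ≤ μ) {x y z : ℝ} (hx : 0 ≤ x) (hy : 0 ≤ y) (hz : 0 ≤ z) :
    c₁ * (x * (r₁ * (1 - x / K₁) - α₁₂ * y - q₁ * z / (1 + a₁ * x)))
      + c₂ * (y * (r₂ * (1 - y / K₂) - α₂₁ * x - q₂ * z / (1 + a₂ * y)))
      + z * (c₁ * q₁ * x / (1 + a₁ * x) + c₂ * q₂ * y / (1 + a₂ * y) - μ - m * z)
      ≤ -φ * (c₁ * x + c₂ * y + z)
        + (c₁ * K₁ * (r₁ + φ) ^ 2 / (4 * r₁) + c₂ * K₂ * (r₂ + φ) ^ 2 / (4 * r₂)) := by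
  have hx_peak : c₁ * (x * (r₁ + φ) - r₁ * x ^ 2 / K₁) ≤ c₁ * K₁ * (r₁ + φ) ^ 2 / (4 * r₁) :=
    (mul_le_mul_of_nonneg_left (mul_sub_mul_sq_div_le hr₁ hK₁ x (r₁ + φ)) hc₁.le).trans_eq
      (by ring)
  have hy_peak : c₂ * (y * (r₂ + φ) - r₂ * y ^ 2 / K₂) ≤ c₂ * K₂ * (r₂ + φ) ^ 2 / (4 * r₂) :=
    (mul_le_mul_of_nonneg_left (mul_sub_mul_sq_div_le hr₂ hK₂ y (r₂ + φ)) hc₂.le).trans_eq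
      (by ring)
  have hcompetition : 0 ≤ (c₁ * α₁₂ + c₂ * α₂₁) * x * y := by positivity
  have hpredator : (φ - μ) * z - m * z ^ 2 ≤ 0 := by nlinarith
  have hsplit : c₁ * (x * (r₁ * (1 - x / K₁) - α₁₂ * y - q₁ * z / (1 + a₁ * x)))
      + c₂ * (y * (r₂ * (1 - y / K₂) - α₂₁ * x - q₂ * z / (1 + a₂ * y)))
      + z * (c₁ * q₁ * x / (1 + a₁ * x) + c₂ * q₂ * y / (1 + a₂ * y) - μ - m * z)
      + φ * (c₁ * x + c₂ * y + z)
      = c₁ * (x * (r₁ + φ) - r₁ * x ^ 2 / K₁) + c₂ * (y * (r₂ + φ) - r₂ * y ^ 2 / K₂)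
        - (c₁ * α₁₂ + c₂ * α₂₁) * x * y + ((φ - μ) * z - m * z ^ 2) := by
    ring
  linarith

theorem IsNonnegSol41.weightedSum_le_gronwallBound {x y z : ℝ → ℝ}
    (hsol : IsNonnegSol41 r₁ r₂ K₁ K₂ q₁ q₂ a₁ a₂ c₁ c₂ μ m α₁₂ α₂₁ x y z)
    (hr₁ : 0 < r₁) (hr₂ : 0 < r₂) (hK₁ : 0 < K₁) (hK₂ : 0 < K₂)
    (hc₁ : 0 < c₁) (hc₂ : 0 < c₂) (hm : 0 < m) (hα₁₂ : 0 ≤ α₁₂) (hα₂₁ : 0 ≤ α₂₁)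
    (hφμ : φ ≤ μ) {t : ℝ} (ht : 0 ≤ t) :
    c₁ * x t + c₂ * y t + z t ≤ gronwallBound (c₁ * x 0 + c₂ * y 0 + z 0) (-φ)
      (c₁ * K₁ * (r₁ + φ) ^ 2 / (4 * r₁) + c₂ * K₂ * (r₂ + φ) ^ 2 / (4 * r₂)) t := by
  obtain ⟨hnonneg, hx, hy, hz⟩ := hsol
  refine le_gronwallBound_of_hasDerivAt (f := fun t => c₁ * x t + c₂ * y t + z t)
    (fun s hs => (((hx s hs).const_mul c₁).add ((hy s hs).const_mul c₂)).add (hz s hs))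
    (fun s hs => ?_) ht
  obtain ⟨hxs, hys, hzs⟩ := hnonneg s hs
  exact weightedSum_field_le hr₁ hr₂ hK₁ hK₂ hc₁ hc₂ hm hα₁₂ hα₂₁ hφμ hxs hys hzs

end System

theorem statement13_general
    (r₁ r₂ K₁ K₂ q₁ q₂ a₁ a₂ c₁ c₂ μ m α₁₂ α₂₁ : ℝ)
    (hr₁ : 0 < r₁) (hr₂ : 0 < r₂) (hK₁ : 0 < K₁) (hK₂ : 0 < K₂)
    (hc₁ : 0 < c₁) (hc₂ : 0 < c₂) (hm : 0 < m)
    (hα₁₂ : 0 ≤ α₁₂) (hα₂₁ : 0 ≤ α₂₁)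
    (φ : ℝ) (hφ₁ : 0 < φ) (hφ₂ : φ ≤ μ)
    (ρ : ℝ)
    (hρ : ρ = c₁ * K₁ * (r₁ + φ) ^ 2 / (4 * r₁)
      + c₂ * K₂ * (r₂ + φ) ^ 2 / (4 * r₂)) :
    (∀ x y z : ℝ → ℝ,
      IsNonnegSol41 r₁ r₂ K₁ K₂ q₁ q₂ a₁ a₂ c₁ c₂ μ m α₁₂ α₂₁ x y z →
      Filter.limsup (fun t => c₁ * x t + c₂ * y t + z t) atTop ≤ ρ / φ) ∧
    ∃ C : Set (ℝ × ℝ × ℝ), IsCompact C ∧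
      C ⊆ {p : ℝ × ℝ × ℝ | 0 ≤ p.1 ∧ 0 ≤ p.2.1 ∧ 0 ≤ p.2.2} ∧
      ∀ x y z : ℝ → ℝ,
        IsNonnegSol41 r₁ r₂ K₁ K₂ q₁ q₂ a₁ a₂ c₁ c₂ μ m α₁₂ α₂₁ x y z →
        ∃ T > (0:ℝ), ∀ t ≥ T, (x t, y t, z t) ∈ C := by
  have hbound (δ : ℝ) : Tendsto (gronwallBound δ (-φ) ρ) atTop (𝓝 (ρ / φ)) := by
    simpa only [neg_div_neg_eq] using tendsto_gronwallBound_of_neg δ ρ (neg_neg_of_pos hφ₁)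
  have hle {x y z : ℝ → ℝ}
      (hsol : IsNonnegSol41 r₁ r₂ K₁ K₂ q₁ q₂ a₁ a₂ c₁ c₂ μ m α₁₂ α₂₁ x y z) :
      ∀ᶠ t in atTop, 0 ≤ t ∧
        c₁ * x t + c₂ * y t + z t ≤ gronwallBound (c₁ * x 0 + c₂ * y 0 + z 0) (-φ) ρ t :=
    eventually_ge_atTop 0 |>.mono fun t ht => ⟨ht, hρ ▸
      hsol.weightedSum_le_gronwallBound hr₁ hr₂ hK₁ hK₂ hc₁ hc₂ hm hα₁₂ hα₂₁ hφ₂ ht⟩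
  refine ⟨fun x y z hsol => ?_, weightedSimplex c₁ c₂ (ρ / φ + 1),
    isCompact_weightedSimplex hc₁ hc₂ _, fun p hp => ⟨hp.1, hp.2.1, hp.2.2.1⟩,
    fun x y z hsol => ?_⟩
  · have hW_nonneg : ∀ᶠ t in atTop, 0 ≤ c₁ * x t + c₂ * y t + z t :=
      (hle hsol).mono fun t ht => by
        obtain ⟨hx, hy, hz⟩ := hsol.1 t ht.1
        positivity
    exact (limsup_le_limsup ((hle hsol).mono fun t ht => ht.2)
      (isCoboundedUnder_le_of_eventually_le atTop hW_nonneg)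
      (hbound _).isBoundedUnder_le).trans_eq (hbound _).limsup_eq
  · obtain ⟨T, hT⟩ := eventually_atTop.1 <|
      (hle hsol).and ((hbound _).eventually (eventually_le_nhds (lt_add_one _)))
    refine ⟨max T 1, by positivity, fun t ht => ?_⟩
    obtain ⟨⟨ht₀, hW⟩, hg⟩ := hT t (le_of_max_le_left ht)
    obtain ⟨hx, hy, hz⟩ := hsol.1 t ht₀
    exact ⟨hx, hy, hz, hW.trans hg⟩

/-- Dissipativity of system (4.1). -/
theorem statement13
    (r₁ r₂ K₁ K₂ q₁ q₂ a₁ a₂ c₁ c₂ μ m α₁₂ α₂₁ : ℝ)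
    (hr₁ : 0 < r₁) (hr₂ : 0 < r₂) (hK₁ : 0 < K₁) (hK₂ : 0 < K₂)
    (hq₁ : 0 < q₁) (hq₂ : 0 < q₂) (ha₁ : 0 < a₁) (ha₂ : 0 < a₂)
    (hc₁ : 0 < c₁) (hc₂ : 0 < c₂) (hμ : 0 < μ) (hm : 0 < m)
    (hα₁₂ : 0 ≤ α₁₂) (hα₂₁ : 0 ≤ α₂₁)
    (φ : ℝ) (hφ₁ : 0 < φ) (hφ₂ : φ ≤ μ)
    (ρ : ℝ)
    (hρ : ρ = c₁ * K₁ * (r₁ + φ) ^ 2 / (4 * r₁)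
      + c₂ * K₂ * (r₂ + φ) ^ 2 / (4 * r₂)) :
    (∀ x y z : ℝ → ℝ,
      IsNonnegSol41 r₁ r₂ K₁ K₂ q₁ q₂ a₁ a₂ c₁ c₂ μ m α₁₂ α₂₁ x y z →
      Filter.limsup (fun t => c₁ * x t + c₂ * y t + z t) atTop ≤ ρ / φ) ∧
    ∃ C : Set (ℝ × ℝ × ℝ), IsCompact C ∧
      C ⊆ {p : ℝ × ℝ × ℝ | 0 ≤ p.1 ∧ 0 ≤ p.2.1 ∧ 0 ≤ p.2.2} ∧
      ∀ x y z : ℝ → ℝ,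
        IsNonnegSol41 r₁ r₂ K₁ K₂ q₁ q₂ a₁ a₂ c₁ c₂ μ m α₁₂ α₂₁ x y z →
        ∃ T > (0:ℝ), ∀ t ≥ T, (x t, y t, z t) ∈ C :=
  statement13_general r₁ r₂ K₁ K₂ q₁ q₂ a₁ a₂ c₁ c₂ μ m α₁₂ α₂₁ hr₁ hr₂ hK₁ hK₂ hc₁ hc₂ hm hα₁₂ hα₂₁
    φ hφ₁ hφ₂ ρ hρ
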